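/- Let G be a P_k-containing, (P_k + tK_1)-free graph for some k ≤ 4 and t ≥ 1, with no isolated vertex. Then the domination number of G is at most t + 3, and consequently the semitotal domination number of G is at most 2t + 6. -/

import Mathlib

open SimpleGraph

/-- `D` is a dominating set of `G`. -/
def IsDomSet {V : Type*} [DecidableEq V] (G : SimpleGraph V) (D : Finset V) : Prop :=
  ∀ v, v ∉ D → ∃ u ∈ D, G.Adj u v

/-- `D` is a total dominating set of `G`. -/
def IsTotDomSet {V : Type*} [DecidableEq V] (G : SimpleGraph V) (D : Finset V) : Prop :=
  ∀ v : V, ∃ u ∈ D, G.Adj u v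

/-- `u` and `v` are distinct and within distance at most 2 in `G`. -/
def WithinTwo {V : Type*} (G : SimpleGraph V) (u v : V) : Prop :=
  G.Adj u v ∨ ∃ w, G.Adj u w ∧ G.Adj w v

/-- `D` is a semitotal dominating set of `G`. -/
def IsSemiTDSet {V : Type*} [DecidableEq V] (G : SimpleGraph V) (D : Finset V) : Prop :=
  IsDomSet G D ∧ ∀ v ∈ D, ∃ u ∈ D, u ≠ v ∧ WithinTwo G u v

/-- The domination number of `G`. -/
noncomputable def gamma {V : Type*} [Fintype V] [DecidableEq V] (G : SimpleGraph V) : ℕ :=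
  sInf {n | ∃ D : Finset V, IsDomSet G D ∧ D.card = n}

/-- The total domination number of `G`. -/
noncomputable def gammaT {V : Type*} [Fintype V] [DecidableEq V] (G : SimpleGraph V) : ℕ :=
  sInf {n | ∃ D : Finset V, IsTotDomSet G D ∧ D.card = n}

/-- The semitotal domination number of `G`. -/
noncomputable def gammaT2 {V : Type*} [Fintype V] [DecidableEq V] (G : SimpleGraph V) : ℕ :=
  sInf {n | ∃ D : Finset V, IsSemiTDSet G D ∧ D.card = n}

/-- The disjoint union `P_k + t·K_1` of a path on `k` vertices and `t` isolated vertices. -/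
def pathPlusIso (k t : ℕ) : SimpleGraph (Fin k ⊕ Fin t) :=
  SimpleGraph.fromRel (fun a b =>
    match a, b with
    | Sum.inl a, Sum.inl b => (pathGraph k).Adj a b
    | _, _ => False)

/-!
Let `P` be the vertex set of an induced `P_k` and `I` a maximal independent set among the vertices
at distance at least two from `P`. Then `P ∪ I` dominates `G`, and `I` together with the path
would induce `P_k + |I| K_1`, so `|I| < t` and `γ(G) ≤ k + t - 1 ≤ t + 3`. Adding one neighbour
of each vertex of a dominating set makes it semitotal, so `γ_{t2}(G) ≤ 2 γ(G)` when `G` has no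
isolated vertex.
-/

open scoped Finset

section Domination

variable {V : Type*} [DecidableEq V] {G : SimpleGraph V}

lemma IsDomSet.isSemiTDSet_union_image {nb : V → V} (hnb : ∀ v, G.Adj v (nb v)) {D : Finset V}
    (hD : IsDomSet G D) : IsSemiTDSet G (D ∪ D.image nb) := by
  refine ⟨fun v hv => ?_, fun v hv => ?_⟩
  · obtain ⟨u, hu, huv⟩ := hD v fun h => hv (Finset.mem_union_left _ h)
    exact ⟨u, Finset.mem_union_left _ hu, huv⟩
  · rcases Finset.mem_union.mp hv with hv | hv
    · exact ⟨nb v, Finset.mem_union_right _ (Finset.mem_image_of_mem _ hv), (hnb v).ne',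
        .inl (hnb v).symm⟩
    · obtain ⟨w, hw, rfl⟩ := Finset.mem_image.mp hv
      exact ⟨w, Finset.mem_union_left _ hw, (hnb w).ne, .inl (hnb w)⟩

lemma exists_isIndepSet_subset_dominating (X : Finset V) :
    ∃ I ⊆ X, G.IsIndepSet I ∧ ∀ v ∈ X, v ∉ I → ∃ u ∈ I, G.Adj u v := by
  classical
  obtain ⟨I, hI, hImax⟩ := Finset.exists_maximal
    (s := X.powerset.filter fun I : Finset V => G.IsIndepSet (I : Set V)) ⟨∅, by simp⟩
  simp only [Finset.mem_filter, Finset.mem_powerset] at hI hImax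
  refine ⟨I, hI.1, hI.2, fun v hvX hvI => ?_⟩
  by_contra! hv
  have hindep : G.IsIndepSet (insert v I : Finset V) := by
    rw [Finset.coe_insert]
    exact hI.2.insert fun u hu _ => ⟨fun h => hv u hu h.symm, hv u hu⟩
  exact hvI (hImax ⟨Finset.insert_subset hvX hI.1, hindep⟩ (Finset.subset_insert v I)
    (Finset.mem_insert_self v I))

variable [Fintype V]

lemma gamma_le_card {D : Finset V} (hD : IsDomSet G D) : gamma G ≤ #D :=
  Nat.sInf_le ⟨D, hD, rfl⟩

variable (G) in
lemma exists_isDomSet_card_eq_gamma : ∃ D, IsDomSet G D ∧ #D = gamma G :=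
  Nat.sInf_mem (s := {n | ∃ D : Finset V, IsDomSet G D ∧ #D = n})
    ⟨_, Finset.univ, fun v hv => absurd (Finset.mem_univ v) hv, rfl⟩

lemma gammaT2_le_two_mul_gamma (hiso : ∀ v : V, ∃ u, G.Adj v u) : gammaT2 G ≤ 2 * gamma G := by
  choose nb hnb using hiso
  obtain ⟨D, hD, hcard⟩ := exists_isDomSet_card_eq_gamma G
  calc gammaT2 G ≤ #(D ∪ D.image nb) := Nat.sInf_le ⟨_, hD.isSemiTDSet_union_image hnb, rfl⟩
    _ ≤ #D + #(D.image nb) := Finset.card_union_le _ _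
    _ ≤ 2 * gamma G := by have := Finset.card_image_le (s := D) (f := nb); omega

lemma exists_isIndepSet_isDomSet_union (S : Finset V) :
    ∃ I : Finset V, G.IsIndepSet I ∧ (∀ v ∈ I, ∀ p ∈ S, p ≠ v ∧ ¬ G.Adj p v) ∧
      IsDomSet G (S ∪ I) := by
  classical
  obtain ⟨I, hIX, hI, hdomX⟩ :=
    exists_isIndepSet_subset_dominating (G := G)
      (Finset.univ.filter fun v => ∀ p ∈ S, p ≠ v ∧ ¬ G.Adj p v)
  refine ⟨I, hI, fun v hv => (Finset.mem_filter.mp (hIX hv)).2, fun v hv => ?_⟩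
  by_cases hvX : ∀ p ∈ S, p ≠ v ∧ ¬ G.Adj p v
  · obtain ⟨u, hu, huv⟩ :=
      hdomX v (by simpa using hvX) fun h => hv (Finset.mem_union_right _ h)
    exact ⟨u, Finset.mem_union_right _ hu, huv⟩
  · push Not at hvX
    obtain ⟨p, hp, hpv⟩ := hvX
    exact ⟨p, Finset.mem_union_left _ hp, hpv fun h => hv (h ▸ Finset.mem_union_left _ hp)⟩

end Domination

lemma pathPlusIso_eq_sum (k t : ℕ) : pathPlusIso k t = pathGraph k ⊕g ⊥ := by
  ext (a | a) (b | b) <;> simp [pathPlusIso, SimpleGraph.sum, and_iff_right_of_imp Adj.ne,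
    (pathGraph k).adj_comm]

def SimpleGraph.Embedding.sumBot {W V U : Type*} {H : SimpleGraph W} {G : SimpleGraph V}
    (f : H ↪g G) (e : U ↪ V) (he : G.IsIndepSet (Set.range e))
    (hfe : ∀ a u, f a ≠ e u ∧ ¬ G.Adj (f a) (e u)) : H ⊕g (⊥ : SimpleGraph U) ↪g G where
  toFun := Sum.elim f e
  inj' := by
    rintro (a | a) (b | b) h
    · exact congrArg Sum.inl (f.injective h)
    · exact absurd h (hfe a b).1
    · exact absurd h.symm (hfe b a).1
    · exact congrArg Sum.inr (e.injective h)
  map_rel_iff' {a b} := by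
    change G.Adj (Sum.elim f e a) (Sum.elim f e b) ↔ _
    rcases a with a | a <;> rcases b with b | b <;>
      simp only [Sum.elim_inl, Sum.elim_inr, SimpleGraph.sum_adj, bot_adj, iff_false]
    · exact f.map_adj_iff
    · exact (hfe a b).2
    · exact fun h => (hfe b a).2 h.symm
    · exact fun h => he ⟨a, rfl⟩ ⟨b, rfl⟩ (fun hab => h.ne (hab ▸ rfl)) h

lemma card_lt_of_isIndepSet_anticomplete {V : Type*} {G : SimpleGraph V} {k t : ℕ}
    (hfree : IsEmpty (pathPlusIso k t ↪g G))
    (f : pathGraph k ↪g G) {I : Finset V} (hI : G.IsIndepSet I)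
    (hIf : ∀ v ∈ I, ∀ a, f a ≠ v ∧ ¬ G.Adj (f a) v) : #I < t := by
  by_contra! ht
  rw [pathPlusIso_eq_sum] at hfree
  let e : Fin t ↪ V :=
    (Fin.castLEEmb ht).trans (I.equivFin.symm.toEmbedding.trans (Function.Embedding.subtype _))
  have heI : ∀ i, e i ∈ I := fun i => (I.equivFin.symm _).2
  exact hfree.false (Embedding.sumBot f e (hI.mono (Set.range_subset_iff.mpr heI))
    fun a i => hIf _ (heI i) a)

theorem pk_tk1_free_domination_bound_general {V : Type*} [Fintype V] [DecidableEq V]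
    (G : SimpleGraph V) (k t : ℕ) (hk : k ≤ 4)
    (hiso : ∀ v : V, ∃ u, G.Adj v u)
    (hPk : Nonempty (pathGraph k ↪g G))
    (hfree : IsEmpty (pathPlusIso k t ↪g G)) :
    gamma G ≤ t + 3 ∧ gammaT2 G ≤ 2 * t + 6 := by
  obtain ⟨f⟩ := hPk
  set P := Finset.univ.map f.toEmbedding
  obtain ⟨I, hI, hIP, hdom⟩ := exists_isIndepSet_isDomSet_union (G := G) P
  have hIt : #I < t := card_lt_of_isIndepSet_anticomplete hfree f hI
    fun v hv a => hIP v hv (f a) (Finset.mem_map_of_mem _ (Finset.mem_univ a))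
  have hγ : gamma G ≤ t + 3 :=
    calc gamma G ≤ #(P ∪ I) := gamma_le_card hdom
      _ ≤ #P + #I := Finset.card_union_le P I
      _ = k + #I := by rw [Finset.card_map, Finset.card_univ, Fintype.card_fin]
      _ ≤ t + 3 := by omega
  exact ⟨hγ, (gammaT2_le_two_mul_gamma hiso).trans (by omega)⟩

theorem pk_tk1_free_domination_bound {V : Type*} [Fintype V] [DecidableEq V]
    (G : SimpleGraph V) (k t : ℕ) (hk : k ≤ 4) (ht : 1 ≤ t)
    (hiso : ∀ v : V, ∃ u, G.Adj v u)
    (hPk : Nonempty (pathGraph k ↪g G))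
    (hfree : IsEmpty (pathPlusIso k t ↪g G)) :
    gamma G ≤ t + 3 ∧ gammaT2 G ≤ 2 * t + 6 :=
  pk_tk1_free_domination_bound_general G k t hk hiso hPk hfree
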